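/- arXiv:0907.2713 — 8 statements merged into one kernel-verified Lean document; each statement's English description precedes it below -/
import Mathlib

section
/- Fix m_v ≥ 0, m_i ≥ 0 and vT ∈ ℝ². Then the infimum over qT ∈ ℝ² of the transverse mass m_T(m_v, vT, m_i, qT) equals m_v + m_i. Moreover, if m_v > 0 the infimum is attained at qT = (m_i/m_v)·vT. -/
open scoped RealInnerProductSpace

/-- Transverse energy `e(m,p) = √(m² + |p|²)`. -/
noncomputable def transverseEnergy (m : ℝ) (p : EuclideanSpace ℝ (Fin 2)) : ℝ :=
  Real.sqrt (m ^ 2 + ‖p‖ ^ 2)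

/-- Transverse mass `m_T(m_v, vT, m_i, qT)`. -/
noncomputable def transverseMass (mv : ℝ) (vT : EuclideanSpace ℝ (Fin 2))
    (mi : ℝ) (qT : EuclideanSpace ℝ (Fin 2)) : ℝ :=
  Real.sqrt (mv ^ 2 + mi ^ 2 +
    2 * (transverseEnergy mv vT * transverseEnergy mi qT - ⟪vT, qT⟫))

/-!
Writing `e_v = e(m_v, vT)` and `e_i = e(m_i, qT)`, the square of the transverse mass is
`(m_v + m_i)² + 2 (e_v e_i - m_v m_i - ⟪vT, qT⟫)`, and the bracket is nonnegative by
Cauchy–Schwarz for the vectors `(m_v, |vT|)` and `(m_i, |qT|)`; it vanishes when these are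
parallel, i.e. at `qT = (m_i / m_v) • vT`. Since a minimiser need not exist for `m_v = 0`, the
upper bound uses that `m_T` is monotone in `m_v`: with `q_δ = (m_i / (m_v + δ)) • vT`,
`m_T(m_v, vT, m_i, q_δ) ≤ m_T(m_v + δ, vT, m_i, q_δ) = m_v + δ + m_i` for every `δ > 0`.
-/

lemma mul_add_mul_le_sqrt_mul_sqrt (a b c d : ℝ) :
    a * c + b * d ≤ √(a ^ 2 + b ^ 2) * √(c ^ 2 + d ^ 2) := by
  simpa [Fin.sum_univ_two] using
    Real.sum_mul_le_sqrt_mul_sqrt Finset.univ ![a, b] ![c, d]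

section

variable (vT qT : EuclideanSpace ℝ (Fin 2))

lemma transverseEnergy_nonneg (m : ℝ) : 0 ≤ transverseEnergy m vT :=
  Real.sqrt_nonneg _

lemma transverseEnergy_sq (m : ℝ) : transverseEnergy m vT ^ 2 = m ^ 2 + ‖vT‖ ^ 2 :=
  Real.sq_sqrt (by positivity)

lemma transverseEnergy_mono {m m' : ℝ} (hm : 0 ≤ m) (h : m ≤ m') :
    transverseEnergy m vT ≤ transverseEnergy m' vT := by
  unfold transverseEnergy
  gcongr

lemma transverseEnergy_smul {c : ℝ} (hc : 0 ≤ c) (m : ℝ) :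
    transverseEnergy (c * m) (c • vT) = c * transverseEnergy m vT := by
  unfold transverseEnergy
  rw [norm_smul, Real.norm_of_nonneg hc, ← Real.sqrt_sq hc, ← Real.sqrt_mul (sq_nonneg c),
    Real.sqrt_sq hc]
  ring_nf

lemma mul_add_inner_le_transverseEnergy_mul (mv mi : ℝ) :
    mv * mi + ⟪vT, qT⟫ ≤ transverseEnergy mv vT * transverseEnergy mi qT :=
  calc mv * mi + ⟪vT, qT⟫ ≤ mv * mi + ‖vT‖ * ‖qT‖ := by gcongr; exact real_inner_le_norm vT qT
    _ ≤ _ := mul_add_mul_le_sqrt_mul_sqrt ..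

lemma add_le_transverseMass (mv mi : ℝ) :
    mv + mi ≤ transverseMass mv vT mi qT := by
  refine Real.le_sqrt_of_sq_le ?_
  linarith [mul_add_inner_le_transverseEnergy_mul vT qT mv mi]

lemma transverseMass_mono_left {mv mv' : ℝ} (hmv : 0 ≤ mv) (h : mv ≤ mv') (mi : ℝ) :
    transverseMass mv vT mi qT ≤ transverseMass mv' vT mi qT := by
  unfold transverseMass
  have := transverseEnergy_mono vT hmv h
  have := transverseEnergy_nonneg qT mi
  gcongr

lemma transverseMass_div_smul {mv mi : ℝ} (hmv : 0 < mv) (hmi : 0 ≤ mi) :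
    transverseMass mv vT mi ((mi / mv) • vT) = mv + mi := by
  have hc : 0 ≤ mi / mv := div_nonneg hmi hmv.le
  have hEi : transverseEnergy mi ((mi / mv) • vT) = mi / mv * transverseEnergy mv vT := by
    rw [← transverseEnergy_smul vT hc, div_mul_cancel₀ mi hmv.ne']
  have hradicand : mv ^ 2 + mi ^ 2 + 2 * (transverseEnergy mv vT *
      transverseEnergy mi ((mi / mv) • vT) - ⟪vT, (mi / mv) • vT⟫) = (mv + mi) ^ 2 := by
    rw [hEi, real_inner_smul_right, real_inner_self_eq_norm_sq, mul_left_comm, ← sq,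
      transverseEnergy_sq]
    field_simp
    ring
  rw [transverseMass, hradicand, Real.sqrt_sq (by linarith)]

end

/-- the infimum of the transverse mass over the invisible transverse
momentum `qT` is `m_v + m_i`, attained (for `m_v > 0`) at `qT = (m_i/m_v) • vT`. -/
theorem iInf_transverseMass_eq (mv mi : ℝ) (hmv : 0 ≤ mv) (hmi : 0 ≤ mi)
    (vT : EuclideanSpace ℝ (Fin 2)) :
    (⨅ qT : EuclideanSpace ℝ (Fin 2), transverseMass mv vT mi qT) = mv + mi ∧
    (0 < mv → transverseMass mv vT mi ((mi / mv) • vT) = mv + mi) := by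
  have hbdd : BddBelow (Set.range fun qT => transverseMass mv vT mi qT) :=
    ⟨mv + mi, Set.forall_mem_range.2 fun qT => add_le_transverseMass vT qT mv mi⟩
  refine ⟨le_antisymm ?_ (le_ciInf fun qT => add_le_transverseMass vT qT mv mi),
    fun h => transverseMass_div_smul vT h hmi⟩
  refine le_of_forall_pos_le_add fun δ hδ => ?_
  calc (⨅ qT, transverseMass mv vT mi qT)
      ≤ transverseMass mv vT mi ((mi / (mv + δ)) • vT) := ciInf_le hbdd _
    _ ≤ transverseMass (mv + δ) vT mi ((mi / (mv + δ)) • vT) :=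
      transverseMass_mono_left vT _ hmv (by linarith) mi
    _ = mv + mi + δ := by rw [transverseMass_div_smul vT (by linarith) hmi]; ring
end

section
/- For fixed m_v ≥ 0, vT ∈ ℝ², qT ∈ ℝ², the transverse mass m_T(m_v, vT, m_i, qT) is a nondecreasing function of the hypothesized invisible mass m_i on [0, ∞): if 0 ≤ μ ≤ m_i then m_T(m_v, vT, μ, qT) ≤ m_T(m_v, vT, m_i, qT). -/
open scoped RealInnerProductSpace

/-- the transverse mass is nondecreasing in the hypothesized
invisible mass. -/
theorem transverseMass_mono_invisible_mass (mv : ℝ) (hmv : 0 ≤ mv)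
    (vT qT : EuclideanSpace ℝ (Fin 2)) (μ mi : ℝ) (hμ : 0 ≤ μ) (hμmi : μ ≤ mi) :
    transverseMass mv vT μ qT ≤ transverseMass mv vT mi qT := by
  unfold transverseMass transverseEnergy
  apply Real.sqrt_le_sqrt
  have h1 : μ ^ 2 ≤ mi ^ 2 := by nlinarith
  have h2 : Real.sqrt (μ ^ 2 + ‖qT‖ ^ 2) ≤ Real.sqrt (mi ^ 2 + ‖qT‖ ^ 2) := by
    apply Real.sqrt_le_sqrt; linarith
  have h3 : (0:ℝ) ≤ Real.sqrt (mv ^ 2 + ‖vT‖ ^ 2) := Real.sqrt_nonneg _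
  nlinarith [mul_le_mul_of_nonneg_left h2 h3]
end

section
/- Suppose a parent particle with four-momentum (E, p), E ≥ |p|, decays into a visible daughter (E_v, p_v) and an invisible daughter (E_i, p_i), i.e. E = E_v + E_i and p = p_v + p_i, where E_v ≥ |p_v| and E_i ≥ |p_i|. Let m_v and m_i be the invariant masses of the daughters, vT and qT their transverse momenta, and m₀ = √(E² − |p|²) the parent mass. Then m_T(m_v, vT, m_i, qT) ≤ m₀. -/
/-!
Write `a = p_{v,z}`, `b = p_{i,z}` and `e_v, e_i` for the transverse energies of the daughters.
Expanding `m₀² = (E_v + E_i)² − |p_v + p_i|²` gives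
`m₀² − m_T² = 2 (E_v E_i − e_v e_i − a b)`, and since `e_v² + a² = E_v²` and `e_i² + b² = E_i²`,
this is nonnegative by the Cauchy–Schwarz inequality for `(e_v, a)` and `(e_i, b)` in `ℝ²`.
-/

open scoped RealInnerProductSpace

/-- Projection of a 3-momentum onto the transverse plane (first two coordinates). -/
noncomputable def projT (p : EuclideanSpace ℝ (Fin 3)) : EuclideanSpace ℝ (Fin 2) :=
  WithLp.toLp 2 (fun i : Fin 2 => p i.castSucc)

/-- Invariant mass `√(E² − |p|²)` of a 3+1 four-momentum `(E, p)`. -/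
noncomputable def invariantMass (E : ℝ) (p : EuclideanSpace ℝ (Fin 3)) : ℝ :=
  Real.sqrt (E ^ 2 - ‖p‖ ^ 2)

lemma mul_add_mul_le_of_sq_add_sq_eq {x y u v X U : ℝ} (hX : x ^ 2 + y ^ 2 = X ^ 2)
    (hU : u ^ 2 + v ^ 2 = U ^ 2) (hX₀ : 0 ≤ X) (hU₀ : 0 ≤ U) : x * u + y * v ≤ X * U := by
  refine le_of_sq_le_sq ?_ (mul_nonneg hX₀ hU₀)
  nlinarith [sq_nonneg (x * v - y * u)]

lemma inner_eq_inner_projT_add (x y : EuclideanSpace ℝ (Fin 3)) :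
    ⟪x, y⟫ = ⟪projT x, projT y⟫ + x 2 * y 2 := by
  simp only [PiLp.inner_apply, Fin.sum_univ_three, Fin.sum_univ_two, projT,
    RCLike.inner_apply, conj_trivial, Fin.castSucc_zero, Fin.castSucc_one]
  ring

lemma norm_sq_eq_norm_projT_sq_add (x : EuclideanSpace ℝ (Fin 3)) :
    ‖x‖ ^ 2 = ‖projT x‖ ^ 2 + x 2 ^ 2 := by
  rw [← real_inner_self_eq_norm_sq, ← real_inner_self_eq_norm_sq, inner_eq_inner_projT_add, sq]

lemma invariantMass_sq {E : ℝ} {p : EuclideanSpace ℝ (Fin 3)} (h : ‖p‖ ≤ E) :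
    invariantMass E p ^ 2 = E ^ 2 - ‖p‖ ^ 2 :=
  Real.sq_sqrt (sub_nonneg.mpr (pow_le_pow_left₀ (norm_nonneg p) h 2))

lemma invariantMass_add_sq {E E' : ℝ} {p p' : EuclideanSpace ℝ (Fin 3)} (h : ‖p‖ ≤ E)
    (h' : ‖p'‖ ≤ E') :
    invariantMass (E + E') (p + p') ^ 2 =
      invariantMass E p ^ 2 + invariantMass E' p' ^ 2 + 2 * (E * E' - ⟪p, p'⟫) := by
  have hsum : ‖p + p'‖ ≤ E + E' := (norm_add_le p p').trans (add_le_add h h')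
  rw [invariantMass_sq hsum, invariantMass_sq h, invariantMass_sq h', norm_add_sq_real]
  ring

lemma transverseEnergy_invariantMass_sq {E : ℝ} {p : EuclideanSpace ℝ (Fin 3)} (h : ‖p‖ ≤ E) :
    transverseEnergy (invariantMass E p) (projT p) ^ 2 + p 2 ^ 2 = E ^ 2 := by
  rw [transverseEnergy, Real.sq_sqrt (by positivity), invariantMass_sq h,
    norm_sq_eq_norm_projT_sq_add]
  ring

theorem transverseMass_le_parent_mass_general (E Ev Ei : ℝ)
    (p pv pinv : EuclideanSpace ℝ (Fin 3))
    (hE : E = Ev + Ei) (hp : p = pv + pinv)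
    (hv : ‖pv‖ ≤ Ev) (hi : ‖pinv‖ ≤ Ei) :
    transverseMass (invariantMass Ev pv) (projT pv)
      (invariantMass Ei pinv) (projT pinv) ≤ invariantMass E p := by
  subst hE hp
  have hEv : 0 ≤ Ev := (norm_nonneg pv).trans hv
  have hEi : 0 ≤ Ei := (norm_nonneg pinv).trans hi
  have cauchySchwarz := mul_add_mul_le_of_sq_add_sq_eq (transverseEnergy_invariantMass_sq hv)
    (transverseEnergy_invariantMass_sq hi) hEv hEi
  rw [transverseMass, Real.sqrt_le_iff]
  refine ⟨Real.sqrt_nonneg _, ?_⟩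
  rw [invariantMass_add_sq hv hi, inner_eq_inner_projT_add]
  linarith

/-- for the decay of a single parent `(E, p)` into a visible daughter
`(E_v, p_v)` and an invisible daughter `(E_i, p_i)`, the transverse mass (evaluated
at the true daughter masses and transverse momenta) is bounded above by the parent
mass `m₀ = √(E² − |p|²)`. -/
theorem transverseMass_le_parent_mass (E Ev Ei : ℝ)
    (p pv pinv : EuclideanSpace ℝ (Fin 3))
    (hE : E = Ev + Ei) (hp : p = pv + pinv) (hEp : ‖p‖ ≤ E)
    (hv : ‖pv‖ ≤ Ev) (hi : ‖pinv‖ ≤ Ei) :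
    transverseMass (invariantMass Ev pv) (projT pv)
      (invariantMass Ei pinv) (projT pinv) ≤ invariantMass E p :=
  transverseMass_le_parent_mass_general E Ev Ei p pv pinv hE hp hv hi
end

section
/- The function mT2 is monotone in the hypothesized invisible masses: if 0 ≤ μ⁽¹⁾ ≤ m_i⁽¹⁾ and 0 ≤ μ⁽²⁾ ≤ m_i⁽²⁾, then for all visible systems and all pTmiss ∈ ℝ², mT2(v₁, v₂, pTmiss, μ⁽¹⁾, μ⁽²⁾) ≤ mT2(v₁, v₂, pTmiss, m_i⁽¹⁾, m_i⁽²⁾). -/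
open scoped RealInnerProductSpace

/-- `mT2(v₁, v₂, pTmiss, m_i⁽¹⁾, m_i⁽²⁾)`: the infimum over all partitions
`qT⁽¹⁾ + qT⁽²⁾ = pTmiss` of the larger of the two transverse masses. -/
noncomputable def mT2 (mv1 : ℝ) (vT1 : EuclideanSpace ℝ (Fin 2))
    (mv2 : ℝ) (vT2 : EuclideanSpace ℝ (Fin 2))
    (ptmiss : EuclideanSpace ℝ (Fin 2)) (mi1 mi2 : ℝ) : ℝ :=
  sInf {r : ℝ | ∃ q1 q2 : EuclideanSpace ℝ (Fin 2), q1 + q2 = ptmiss ∧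
    r = max (transverseMass mv1 vT1 mi1 q1) (transverseMass mv2 vT2 mi2 q2)}


lemma transverseEnergy_nonneg_s7 (m : ℝ) (p : EuclideanSpace ℝ (Fin 2)) :
    0 ≤ transverseEnergy m p := Real.sqrt_nonneg _

lemma transverseEnergy_mono_s7 {μ m : ℝ} (hμ : 0 ≤ μ) (h : μ ≤ m)
    (p : EuclideanSpace ℝ (Fin 2)) : transverseEnergy μ p ≤ transverseEnergy m p := by
  apply Real.sqrt_le_sqrt
  have : μ ^ 2 ≤ m ^ 2 := by nlinarith
  linarith

lemma transverseMass_mono (mv : ℝ) (vT : EuclideanSpace ℝ (Fin 2))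
    {μ m : ℝ} (hμ : 0 ≤ μ) (h : μ ≤ m) (q : EuclideanSpace ℝ (Fin 2)) :
    transverseMass mv vT μ q ≤ transverseMass mv vT m q := by
  apply Real.sqrt_le_sqrt
  have h1 : μ ^ 2 ≤ m ^ 2 := by nlinarith
  have h2 : transverseEnergy μ q ≤ transverseEnergy m q := transverseEnergy_mono_s7 hμ h q
  have h3 : 0 ≤ transverseEnergy mv vT := transverseEnergy_nonneg_s7 _ _
  nlinarith

/-- `mT2` is monotone in the hypothesized invisible masses. -/
theorem mT2_mono_invisible_masses (mv1 mv2 : ℝ) (hmv1 : 0 ≤ mv1) (hmv2 : 0 ≤ mv2)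
    (vT1 vT2 ptmiss : EuclideanSpace ℝ (Fin 2))
    (μ1 μ2 mi1 mi2 : ℝ) (hμ1 : 0 ≤ μ1) (h1 : μ1 ≤ mi1) (hμ2 : 0 ≤ μ2) (h2 : μ2 ≤ mi2) :
    mT2 mv1 vT1 mv2 vT2 ptmiss μ1 μ2 ≤ mT2 mv1 vT1 mv2 vT2 ptmiss mi1 mi2 := by
  unfold mT2
  have hbdd : BddBelow {r : ℝ | ∃ q1 q2 : EuclideanSpace ℝ (Fin 2), q1 + q2 = ptmiss ∧
      r = max (transverseMass mv1 vT1 μ1 q1) (transverseMass mv2 vT2 μ2 q2)} :=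
    ⟨0, fun r ⟨q1, q2, _, hr⟩ => hr ▸ le_max_of_le_left (Real.sqrt_nonneg _)⟩
  refine le_csInf ⟨max (transverseMass mv1 vT1 mi1 ptmiss) (transverseMass mv2 vT2 mi2 0),
    ptmiss, 0, by simp, rfl⟩ ?_
  rintro r ⟨q1, q2, hq, rfl⟩
  refine le_trans (csInf_le hbdd ⟨q1, q2, hq, rfl⟩) ?_
  exact max_le_max (transverseMass_mono mv1 vT1 hμ1 h1 q1)
    (transverseMass_mono mv2 vT2 hμ2 h2 q2)
end

section
/- (Lemma 3) Suppose visible system 2 has zero transverse momentum and zero mass (vT⁽²⁾ = 0, m_v⁽²⁾ = 0) and the hypothesized invisible mass of branch 1 is zero (m_i⁽¹⁾ = 0). Then for every pTmiss ∈ ℝ², every m_v⁽¹⁾ ≥ 0, every vT⁽¹⁾ ∈ ℝ² and every m_i⁽²⁾ ≥ 0, mT2(v₁, v₂, pTmiss, 0, m_i⁽²⁾) = m_< = max(m_v⁽¹⁾, m_i⁽²⁾). -/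
open scoped RealInnerProductSpace

/-- Lemma 3: when `vT⁽²⁾ = 0`, `m_v⁽²⁾ = 0` and `m_i⁽¹⁾ = 0`,
`mT2 = m_< = max(m_v⁽¹⁾, m_i⁽²⁾)`. -/
theorem mT2_eq_of_vT2_zero (mv1 mi2 : ℝ) (hmv1 : 0 ≤ mv1) (hmi2 : 0 ≤ mi2)
    (vT1 ptmiss : EuclideanSpace ℝ (Fin 2)) :
    mT2 mv1 vT1 0 0 ptmiss 0 mi2 = max mv1 mi2 := by
  have hE00 : transverseEnergy 0 (0 : EuclideanSpace ℝ (Fin 2)) = 0 := by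
    simp [transverseEnergy]
  -- branch 2 is always mi2
  have hB2 : ∀ q : EuclideanSpace ℝ (Fin 2), transverseMass 0 0 mi2 q = mi2 := by
    intro q
    simp [transverseMass, hE00, Real.sqrt_sq hmi2]
  -- branch 1 at q1 = 0 is mv1
  have hB1zero : transverseMass mv1 vT1 0 (0 : EuclideanSpace ℝ (Fin 2)) = mv1 := by
    simp [transverseMass, hE00, Real.sqrt_sq hmv1]
  -- branch 1 is always ≥ mv1
  have hB1ge : ∀ q : EuclideanSpace ℝ (Fin 2), mv1 ≤ transverseMass mv1 vT1 0 q := by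
    intro q
    have hE0q : transverseEnergy 0 q = ‖q‖ := by
      simp [transverseEnergy, Real.sqrt_sq (norm_nonneg q)]
    have h1 : ⟪vT1, q⟫ ≤ ‖vT1‖ * ‖q‖ := real_inner_le_norm _ _
    have h2 : ‖vT1‖ ≤ transverseEnergy mv1 vT1 := by
      rw [show ‖vT1‖ = Real.sqrt (‖vT1‖ ^ 2) from (Real.sqrt_sq (norm_nonneg _)).symm]
      exact Real.sqrt_le_sqrt (by nlinarith)
    have h3 : ‖vT1‖ * ‖q‖ ≤ transverseEnergy mv1 vT1 * ‖q‖ :=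
      mul_le_mul_of_nonneg_right h2 (norm_nonneg q)
    calc mv1 = Real.sqrt (mv1 ^ 2) := (Real.sqrt_sq hmv1).symm
      _ ≤ transverseMass mv1 vT1 0 q := by
          unfold transverseMass
          rw [hE0q]
          exact Real.sqrt_le_sqrt (by nlinarith)
  set S : Set ℝ := {r : ℝ | ∃ q1 q2 : EuclideanSpace ℝ (Fin 2), q1 + q2 = ptmiss ∧
    r = max (transverseMass mv1 vT1 0 q1) (transverseMass 0 0 mi2 q2)} with hS
  have hmem : max mv1 mi2 ∈ S := by
    refine ⟨0, ptmiss, by simp, ?_⟩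
    rw [hB1zero, hB2]
  have hlb : ∀ r ∈ S, max mv1 mi2 ≤ r := by
    rintro r ⟨q1, q2, -, rfl⟩
    rw [hB2]
    exact max_le_max (hB1ge q1) le_rfl
  exact le_antisymm (csInf_le ⟨_, hlb⟩ hmem) (le_csInf ⟨_, hmem⟩ hlb)
end

section
/- (Lemma 4) If pTmiss = 0 and both hypothesized invisible masses are zero (m_i⁽¹⁾ = m_i⁽²⁾ = 0), then for all visible systems, mT2(v₁, v₂, 0, 0, 0) = m_< = max(m_v⁽¹⁾, m_v⁽²⁾). -/
open scoped RealInnerProductSpace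

lemma transverseMass_zero_le (mv : ℝ) (hmv : 0 ≤ mv) (vT q : EuclideanSpace ℝ (Fin 2)) :
    mv ≤ transverseMass mv vT 0 q := by
  have hE : transverseEnergy 0 q = ‖q‖ := by
    simp [transverseEnergy, Real.sqrt_sq (norm_nonneg q)]
  have h1 : ‖vT‖ ≤ transverseEnergy mv vT := by
    rw [transverseEnergy]
    nlinarith [Real.sq_sqrt (by positivity : (0:ℝ) ≤ mv ^ 2 + ‖vT‖ ^ 2),
      Real.sqrt_nonneg (mv ^ 2 + ‖vT‖ ^ 2), norm_nonneg vT, sq_nonneg mv]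
  have hcs : ⟪vT, q⟫ ≤ ‖vT‖ * ‖q‖ := real_inner_le_norm vT q
  have hnn : (0:ℝ) ≤ transverseEnergy mv vT * transverseEnergy 0 q - ⟪vT, q⟫ := by
    rw [hE]
    nlinarith [norm_nonneg q]
  calc mv = Real.sqrt (mv ^ 2) := by rw [Real.sqrt_sq hmv]
    _ ≤ transverseMass mv vT 0 q := by
        rw [transverseMass]
        apply Real.sqrt_le_sqrt
        nlinarith

lemma transverseMass_self_zero (mv : ℝ) (hmv : 0 ≤ mv) (vT : EuclideanSpace ℝ (Fin 2)) :
    transverseMass mv vT 0 0 = mv := by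
  have hE : transverseEnergy 0 (0 : EuclideanSpace ℝ (Fin 2)) = 0 := by
    simp [transverseEnergy]
  simp [transverseMass, hE, Real.sqrt_sq hmv]

/-- Lemma 4: when `pTmiss = 0` and `m_i⁽¹⁾ = m_i⁽²⁾ = 0`,
`mT2 = m_< = max(m_v⁽¹⁾, m_v⁽²⁾)`. -/
theorem mT2_eq_of_ptmiss_zero (mv1 mv2 : ℝ) (hmv1 : 0 ≤ mv1) (hmv2 : 0 ≤ mv2)
    (vT1 vT2 : EuclideanSpace ℝ (Fin 2)) :
    mT2 mv1 vT1 mv2 vT2 0 0 0 = max mv1 mv2 := by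
  apply le_antisymm
  · apply csInf_le
    · exact ⟨max mv1 mv2, fun r ⟨q1, q2, _, hr⟩ => hr ▸
        max_le_max (transverseMass_zero_le mv1 hmv1 vT1 q1)
          (transverseMass_zero_le mv2 hmv2 vT2 q2)⟩
    · exact ⟨0, 0, by simp, by
        rw [transverseMass_self_zero mv1 hmv1, transverseMass_self_zero mv2 hmv2]⟩
  · apply le_csInf
    · exact ⟨max mv1 mv2, 0, 0, by simp, by
        rw [transverseMass_self_zero mv1 hmv1, transverseMass_self_zero mv2 hmv2]⟩
    · rintro r ⟨q1, q2, _, rfl⟩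
      exact max_le_max (transverseMass_zero_le mv1 hmv1 vT1 q1)
        (transverseMass_zero_le mv2 hmv2 vT2 q2)
end

section
/- (Lemma 6) Suppose m_v⁽¹⁾ = m_v⁽²⁾ = 0 and m_i⁽¹⁾ = m_i⁽²⁾ = 0, and suppose pTmiss can be expressed as pTmiss = x₁·vT⁽¹⁾ + x₂·vT⁽²⁾ for some real numbers x₁, x₂ ≥ 0. Then mT2(v₁, v₂, pTmiss, 0, 0) = m_< = 0. -/
open scoped RealInnerProductSpace

/-- Lemma 6: when all masses vanish and `pTmiss` is a nonnegative
combination `x₁ • vT⁽¹⁾ + x₂ • vT⁽²⁾`, then `mT2 = m_< = 0`. -/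
theorem mT2_eq_zero_of_ptmiss_nonneg_combination
    (vT1 vT2 : EuclideanSpace ℝ (Fin 2)) (x1 x2 : ℝ) (hx1 : 0 ≤ x1) (hx2 : 0 ≤ x2) :
    mT2 0 vT1 0 vT2 (x1 • vT1 + x2 • vT2) 0 0 = 0 := by
  have key : ∀ (v : EuclideanSpace ℝ (Fin 2)) (c : ℝ), 0 ≤ c →
      transverseMass 0 v 0 (c • v) = 0 := by
    intro v c hc
    unfold transverseMass transverseEnergy
    have h1 : Real.sqrt ((0:ℝ) ^ 2 + ‖v‖ ^ 2) = ‖v‖ := by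
      rw [zero_pow two_ne_zero, zero_add, Real.sqrt_sq (norm_nonneg v)]
    have h2 : Real.sqrt ((0:ℝ) ^ 2 + ‖c • v‖ ^ 2) = c * ‖v‖ := by
      rw [zero_pow two_ne_zero, zero_add, Real.sqrt_sq (norm_nonneg _), norm_smul,
        Real.norm_eq_abs, abs_of_nonneg hc]
    rw [h1, h2, real_inner_smul_right, real_inner_self_eq_norm_sq]
    ring_nf
    exact Real.sqrt_zero
  have hmem : (0:ℝ) ∈ {r : ℝ | ∃ q1 q2 : EuclideanSpace ℝ (Fin 2),
      q1 + q2 = x1 • vT1 + x2 • vT2 ∧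
      r = max (transverseMass 0 vT1 0 q1) (transverseMass 0 vT2 0 q2)} := by
    refine ⟨x1 • vT1, x2 • vT2, rfl, ?_⟩
    rw [key vT1 x1 hx1, key vT2 x2 hx2, max_self]
  have hlb : ∀ r ∈ {r : ℝ | ∃ q1 q2 : EuclideanSpace ℝ (Fin 2),
      q1 + q2 = x1 • vT1 + x2 • vT2 ∧
      r = max (transverseMass 0 vT1 0 q1) (transverseMass 0 vT2 0 q2)}, (0:ℝ) ≤ r := by
    rintro r ⟨q1, q2, -, rfl⟩
    exact le_max_of_le_left (Real.sqrt_nonneg _)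
  exact le_antisymm (csInf_le ⟨0, hlb⟩ hmem) (le_csInf ⟨0, hmem⟩ hlb)
end

section
/- Let c₁, …, c_K be future-directed causal 2+1 vectors (each c_k = (e_k, p_k) with e_k ≥ |p_k|), let τ = c₁ + ⋯ + c_K, and let σ = Σ_{k ∈ S} c_k be the sum over any subset S ⊆ {1, …, K}. Then the Minkowski norms satisfy σ² ≤ τ², i.e. (σ⁰)² − |σT|² ≤ (τ⁰)² − |τT|², where the superscript 0 denotes the time component and the subscript T the ℝ² component. In particular, omitting constituents from a composite system never increases its transverse mass. -/
open scoped RealInnerProductSpace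

private lemma sum_causal (K : ℕ) (c : Fin K → ℝ × EuclideanSpace ℝ (Fin 2))
    (hc : ∀ k, ‖(c k).2‖ ≤ (c k).1) (T : Finset (Fin K)) :
    ‖(∑ k ∈ T, c k).2‖ ≤ (∑ k ∈ T, c k).1 := by
  rw [Prod.fst_sum, Prod.snd_sum]
  calc ‖∑ k ∈ T, (c k).2‖ ≤ ∑ k ∈ T, ‖(c k).2‖ := norm_sum_le _ _
    _ ≤ ∑ k ∈ T, (c k).1 := Finset.sum_le_sum fun k _ => hc k

/-- for future-directed causal 2+1 vectors `c₁, …, c_K` with total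
sum `τ` and partial sum `σ` over a subset `S`, the Minkowski norms satisfy
`σ² ≤ τ²`. -/
theorem minkowski_sq_subset_sum_le (K : ℕ) (c : Fin K → ℝ × EuclideanSpace ℝ (Fin 2))
    (hc : ∀ k, ‖(c k).2‖ ≤ (c k).1) (S : Finset (Fin K)) :
    (∑ k ∈ S, c k).1 ^ 2 - ‖(∑ k ∈ S, c k).2‖ ^ 2 ≤
      (∑ k, c k).1 ^ 2 - ‖(∑ k, c k).2‖ ^ 2 := by
  have hsplit : (∑ k, c k) = (∑ k ∈ S, c k) + (∑ k ∈ Sᶜ, c k) :=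
    (Finset.sum_add_sum_compl S c).symm
  set σ := ∑ k ∈ S, c k with hσ
  set ρ := ∑ k ∈ Sᶜ, c k with hρ
  have h1 : ‖σ.2‖ ≤ σ.1 := sum_causal K c hc S
  have h2 : ‖ρ.2‖ ≤ ρ.1 := sum_causal K c hc Sᶜ
  have h1' : (0:ℝ) ≤ σ.1 := le_trans (norm_nonneg _) h1
  have h2' : (0:ℝ) ≤ ρ.1 := le_trans (norm_nonneg _) h2
  rw [hsplit]
  have hip : ⟪σ.2, ρ.2⟫ ≤ σ.1 * ρ.1 :=
    le_trans (real_inner_le_norm _ _) (mul_le_mul h1 h2 (norm_nonneg _) h1')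
  have hρsq : ‖ρ.2‖ ^ 2 ≤ ρ.1 ^ 2 := by
    apply pow_le_pow_left₀ (norm_nonneg _) h2
  have hexp : ‖(σ + ρ).2‖ ^ 2 = ‖σ.2‖ ^ 2 + 2 * ⟪σ.2, ρ.2⟫ + ‖ρ.2‖ ^ 2 := by
    simpa [pow_two] using norm_add_sq_real σ.2 ρ.2
  have : (σ + ρ).1 = σ.1 + ρ.1 := rfl
  rw [this, hexp]
  nlinarith
end
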